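/- arXiv:1305.6110 — 8 statements merged into one kernel-verified Lean document; each statement's English description precedes it below -/
import Mathlib

section
/- With respect to partial refinement, sequential composition is monotonic in its first operand, while demonic choice and the conditional are monotonic in both operands: (1) if S ⊴ S' then S ; T ⊴ S' ; T; (2) if S ⊴ S' and T ⊴ T' then S ⊓ T ⊴ S' ⊓ T' and (if B then S else T) ⊴ (if B then S' else T'). -/
/-- A state predicate on a type `α`. -/
abbrev Pred (α : Type*) := α → Prop

/-- A two-exit predicate transformer with initial state space `α`,
normal exit state space `β` and exceptional exit state space `γ`. -/
abbrev PT (α β γ : Type*) := Pred β → Pred γ → Pred α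

/-- Entailment ordering on state predicates. -/
def Entails {α : Type*} (p q : Pred α) : Prop := ∀ σ, p σ → q σ

/-- Monotonicity of a predicate transformer. -/
def Monotonic {α β γ : Type*} (S : PT α β γ) : Prop :=
  ∀ q q' r r', Entails q q' → Entails r r' → Entails (S q r) (S q' r')

/-- `skip` changes nothing and succeeds. -/
def skipPT {α γ : Type*} : PT α α γ := fun q _ => q

/-- `raise` changes nothing and fails. -/
def raisePT {α β : Type*} : PT α β α := fun _ r => r

/-- `abort` is completely unpredictable. -/
def abortPT {α β γ : Type*} : PT α β γ := fun _ _ _ => False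

/-- `stop` blocks execution. -/
def stopPT {α β γ : Type*} : PT α β γ := fun _ _ _ => True

/-- Sequential composition: `(S ; T)(q,r) = S (T(q,r), r)`. -/
def seqPT {α β γ δ : Type*} (S : PT α β γ) (T : PT β δ γ) : PT α δ γ :=
  fun q r => S (T q r) r

/-- Exceptional composition: `(S ;; T)(q,r) = S (q, T(q,r))`. -/
def excPT {α β γ δ : Type*} (S : PT α β γ) (T : PT γ β δ) : PT α β δ :=
  fun q r => S q (T q r)

/-- Demonic choice. -/
def demonicPT {α β γ : Type*} (S T : PT α β γ) : PT α β γ :=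
  fun q r σ => S q r σ ∧ T q r σ

/-- A Boolean program expression, given by its definedness and its value. -/
structure BExp (α : Type*) where
  deff : Pred α
  val : Pred α

/-- The conditional `if B then S else T`. -/
def condPT {α β : Type*} (B : BExp α) (S T : PT α β α) : PT α β α :=
  fun q r σ =>
    (B.deff σ → ((B.val σ → S q r σ) ∧ (¬ B.val σ → T q r σ))) ∧ (¬ B.deff σ → r σ)

/-- TotalC refinement ordering. -/
def Refines {α β γ : Type*} (S T : PT α β γ) : Prop :=
  ∀ q r, Entails (S q r) (T q r)

/-- PartialC refinement: `S ⊴ T` iff `S ⊓ raise ⊑ T`. -/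
def PRefines {α β : Type*} (S T : PT α β α) : Prop :=
  Refines (demonicPT S raisePT) T

/-- TotalC correctness assertion `⦃p⦄ S ⦃q,r⦄`. -/
def TotalC {α β γ : Type*} (p : Pred α) (S : PT α β γ) (q : Pred β) (r : Pred γ) : Prop :=
  Entails p (S q r)

/-- PartialC correctness assertion `[p] S [q,r]`. -/
def PartialC {α β : Type*} (p : Pred α) (S : PT α β α) (q : Pred β) (r : Pred α) : Prop :=
  Entails p (S q (fun σ => p σ ∨ r σ))

/-- The loop `while B do S`: the least fixed point, with respect to total
refinement, of `X ↦ if B then (S ; X) else skip`, given by Knaster-Tarski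
as the infimum (pointwise) of all prefixed points. -/
def whileDo {α : Type*} (B : BExp α) (S : PT α α α) : PT α α α :=
  fun q r σ => ∀ X : PT α α α, Refines (condPT B (seqPT S X) skipPT) X → X q r σ
/-- with respect to partial refinement, sequential composition
is monotonic in its first operand, while demonic choice and the conditional
are monotonic in both operands. -/
theorem prefines_monotonic {α : Type*}
    (S S' T T' : PT α α α) (B : BExp α)
    (hS : PRefines S S') :
    PRefines (seqPT S T) (seqPT S' T) ∧
    (PRefines T T' →
      PRefines (demonicPT S T) (demonicPT S' T') ∧
      PRefines (condPT B S T) (condPT B S' T')) := by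
  constructor
  · intro q r σ h
    exact hS (T q r) r σ h
  · intro hT
    constructor
    · intro q r σ h
      obtain ⟨⟨hs, ht⟩, hr⟩ := h
      exact ⟨hS q r σ ⟨hs, hr⟩, hT q r σ ⟨ht, hr⟩⟩
    · intro q r σ h
      obtain ⟨⟨h1, h2⟩, hr⟩ := h
      refine ⟨fun hd => ⟨fun hv => hS q r σ ⟨(h1 hd).1 hv, hr⟩,
        fun hv => hT q r σ ⟨(h1 hd).2 hv, hr⟩⟩, fun _ => hr⟩
end

section
/- Incremental development rule: if S ⊴ (if B then T else raise) and S ⊴ (if B' then T' else raise), then S ⊴ (if B then T else (if B' then T' else raise)). -/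
/-- incremental development rule. -/
theorem incremental_development {α : Type*}
    (S T T' : PT α α α) (B B' : BExp α)
    (h1 : PRefines S (condPT B T raisePT))
    (h2 : PRefines S (condPT B' T' raisePT)) :
    PRefines S (condPT B T (condPT B' T' raisePT)) := by
  intro q r σ hσ
  have h1' := h1 q r σ hσ
  have h2' := h2 q r σ hσ
  simp only [condPT, raisePT] at *
  tauto
end

section
/- Total correctness rule for try-catch: if S is a monotonic predicate transformer, then for all state predicates p, q, r: ⦃p⦄ try S catch T ⦃q,r⦄ holds iff there exists a state predicate h such that ⦃p⦄ S ⦃q,h⦄ and ⦃h⦄ T ⦃q,r⦄. -/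
/-- total correctness rule for try-catch. -/
theorem total_try_catch {α β γ δ : Type*} (S : PT α β γ) (T : PT γ β δ)
    (hS : Monotonic S) (p : Pred α) (q : Pred β) (r : Pred δ) :
    TotalC p (excPT S T) q r ↔ ∃ h : Pred γ, TotalC p S q h ∧ TotalC h T q r := by
  constructor
  · intro hpc
    exact ⟨T q r, hpc, fun σ h => h⟩
  · rintro ⟨h, h1, h2⟩ σ hp
    exact hS q q h (T q r) (fun _ x => x) h2 σ (h1 σ hp)
end

section
/- Partial correctness rule for sequential composition: if S is a monotonic predicate transformer, then for all state predicates p, q, r: [p] S ; T [q,r] holds iff there exists a state predicate h such that [p] S [h,r] and ⦃h⦄ T ⦃q, p ∨ r⦄. -/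
/-- partial correctness rule for sequential composition. -/
theorem partial_seq {α β δ : Type*} (S : PT α β α) (T : PT β δ α)
    (hS : Monotonic S) (p : Pred α) (q : Pred δ) (r : Pred α) :
    PartialC p (seqPT S T) q r ↔
      ∃ h : Pred β, PartialC p S h r ∧ TotalC h T q (fun σ => p σ ∨ r σ) := by
  constructor
  · intro H
    exact ⟨T q (fun σ => p σ ∨ r σ), H, fun σ hσ => hσ⟩
  · rintro ⟨h, hPS, hT⟩ σ hp
    exact hS h (T q (fun σ => p σ ∨ r σ)) _ _ hT (fun _ x => x) σ (hPS σ hp)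
end

section
/- Partial correctness rule for try-catch: if S is a monotonic predicate transformer, then for all state predicates p, q, r: [p] try S catch T [q,r] holds iff there exists a state predicate h such that ⦃p⦄ S ⦃q,h⦄ and ⦃h⦄ T ⦃q, p ∨ r⦄. -/
/-- partial correctness rule for try-catch. -/
theorem partial_try_catch {α β γ : Type*} (S : PT α β γ) (T : PT γ β α)
    (hS : Monotonic S) (p : Pred α) (q : Pred β) (r : Pred α) :
    PartialC p (excPT S T) q r ↔
      ∃ h : Pred γ, TotalC p S q h ∧ TotalC h T q (fun σ => p σ ∨ r σ) := by
  constructor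
  · intro hp
    exact ⟨T q (fun σ => p σ ∨ r σ), hp, fun σ h => h⟩
  · rintro ⟨h, h1, h2⟩ σ hpσ
    exact hS q q h (T q (fun σ => p σ ∨ r σ)) (fun _ x => x) h2 σ (h1 σ hpσ)
end

section
/- Total correctness of loops via ranked predicates: let S be a monotonic predicate transformer on Σ, B a Boolean program expression with definedness defB and value valB, W a type with a well-founded relation <, p a state predicate (the invariant), v : Σ → W (the variant), and r a state predicate. Define p_w σ = p σ ∧ v σ = w and p_{<w} σ = p σ ∧ v σ < w. If for every w ∈ W, ⦃p_w ∧ defB ∧ valB⦄ S ⦃p_{<w}, r⦄ holds, then ⦃p⦄ while B do S ⦃p ∧ defB ∧ ¬valB, (p ∧ ¬defB) ∨ r⦄ holds. -/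
/-- total correctness of loops via ranked predicates. -/
theorem total_while {α : Type*} (S : PT α α α) (hS : Monotonic S) (B : BExp α)
    {W : Type*} (lt : W → W → Prop) (hwf : WellFounded lt)
    (p r : Pred α) (v : α → W)
    (h : ∀ w : W, TotalC (fun σ => (p σ ∧ v σ = w) ∧ B.deff σ ∧ B.val σ) S
        (fun σ => p σ ∧ lt (v σ) w) r) :
    TotalC p (whileDo B S)
      (fun σ => p σ ∧ B.deff σ ∧ ¬ B.val σ)
      (fun σ => (p σ ∧ ¬ B.deff σ) ∨ r σ) := by
  intro σ hp X hX
  have main : ∀ w, ∀ σ, v σ = w → p σ →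
      X (fun σ => p σ ∧ B.deff σ ∧ ¬ B.val σ) (fun σ => (p σ ∧ ¬ B.deff σ) ∨ r σ) σ := by
    intro w
    induction w using hwf.induction with
    | _ w ih =>
      intro σ hv hp
      apply hX _ _ σ
      constructor
      · intro hdef
        constructor
        · intro hval
          have := h w σ ⟨⟨hp, hv⟩, hdef, hval⟩
          refine hS _ _ _ _ ?_ ?_ σ this
          · intro τ ⟨hpτ, hlt⟩
            exact ih (v τ) hlt τ rfl hpτ
          · intro τ hr; exact Or.inr hr
        · intro hval; exact ⟨hp, hdef, hval⟩
      · intro hdef; exact Or.inl ⟨hp, hdef⟩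
  exact main (v σ) σ rfl hp
end

section
/- Partial correctness of loops via ranked predicates: let S be a monotonic predicate transformer on Σ, B a Boolean program expression with definedness defB and value valB, W a type with a well-founded relation <, p a state predicate (the invariant), v : Σ → W (the variant), and r a state predicate. Define p_w σ = p σ ∧ v σ = w and p_{<w} σ = p σ ∧ v σ < w. If for every w ∈ W, [p_w ∧ defB ∧ valB] S [p_{<w}, r] holds, then [p] while B do S [p ∧ defB ∧ ¬valB, r] holds. -/
/-- partial correctness of loops via ranked predicates. -/
theorem partial_while {α : Type*} (S : PT α α α) (hS : Monotonic S) (B : BExp α)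
    {W : Type*} (lt : W → W → Prop) (hwf : WellFounded lt)
    (p r : Pred α) (v : α → W)
    (h : ∀ w : W, PartialC (fun σ => (p σ ∧ v σ = w) ∧ B.deff σ ∧ B.val σ) S
        (fun σ => p σ ∧ lt (v σ) w) r) :
    PartialC p (whileDo B S)
      (fun σ => p σ ∧ B.deff σ ∧ ¬ B.val σ) r := by
  intro σ hp X hX
  set q : Pred α := fun σ => p σ ∧ B.deff σ ∧ ¬ B.val σ
  set pr : Pred α := fun σ => p σ ∨ r σ
  suffices key : ∀ w : W, ∀ σ, p σ → v σ = w → X q pr σ from key (v σ) σ hp rfl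
  intro w
  induction w using WellFounded.induction hwf with
  | _ w IH =>
    intro σ hp hv
    apply hX q pr σ
    constructor
    · intro hdef
      constructor
      · intro hval
        have hs := h w σ ⟨⟨hp, hv⟩, hdef, hval⟩
        exact hS _ _ _ _ (fun σ' h' => IH (v σ') (h'.2) σ' h'.1 rfl)
          (fun σ' h' => h'.elim (fun hh => Or.inl hh.1.1) Or.inr) σ hs
      · intro hval
        exact ⟨hp, hdef, hval⟩
    · intro _
      exact Or.inl hp
end

section
/- Partial refinement is equivalent to preservation of partial correctness: for predicate transformers S, T on state space Σ, S ⊴ T holds iff for all state predicates p, q, r, [p] S [q,r] implies [p] T [q,r]. -/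
/-- partial refinement is equivalent to preservation of
partial correctness. -/
theorem prefines_iff_partial_preserved {α β : Type*} (S T : PT α β α) :
    PRefines S T ↔
      ∀ (p : Pred α) (q : Pred β) (r : Pred α), PartialC p S q r → PartialC p T q r := by
  constructor
  · intro h p q r hS σ hp
    exact h q (fun σ => p σ ∨ r σ) σ ⟨hS σ hp, Or.inl hp⟩
  · intro h q r σ ⟨hS, hr⟩
    have heq : (fun σ' => (σ' = σ) ∨ r σ') = r := by
      funext σ'
      exact propext ⟨fun h' => h'.elim (fun e => e ▸ hr) id, Or.inr⟩
    have := h (fun σ' => σ' = σ) q r (by intro σ' h'; subst h'; rw [heq]; exact hS) σ rfl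
    rwa [heq] at this
end
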